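/- Let 𝒜 be an algebra of subsets of Ω, (F_n) a norm bounded sequence in ba(𝒜)₊, δ > 0, and λ a finitely additive probability on 𝒜. Then there exist ξ ∈ ba(𝒜)₊ absolutely continuous with respect to λ satisfying ‖ξ‖ ≥ sup_k limsup_n ‖F_n ∧ 2^k λ‖ − δ, a sequence (G_n) with G_n in the convex hull of {F_n, F_{n+1}, ...}, and sets (A_n) in 𝒜, such that ‖G_n restricted to A_n − ξ‖ → 0 and Σ_n λ(A_nᶜ) < ∞. -/

import Mathlib

noncomputable section
open Filter Set

variable {Ω : Type}

/-- `C` is an algebra of subsets of `Ω`. -/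
def IsSetAlg (C : Set (Set Ω)) : Prop :=
  ∅ ∈ C ∧ (∀ A ∈ C, Aᶜ ∈ C) ∧ ∀ A ∈ C, ∀ B ∈ C, A ∪ B ∈ C

/-- `μ` is finitely additive on the algebra `C`. -/
def IsFinAdd (C : Set (Set Ω)) (μ : Set Ω → ℝ) : Prop :=
  μ ∅ = 0 ∧ ∀ A ∈ C, ∀ B ∈ C, Disjoint A B → μ (A ∪ B) = μ A + μ B

/-- `π` is a partition of `A` into finitely many members of `C`. -/
def IsPartition (C : Set (Set Ω)) (π : Finset (Set Ω)) (A : Set Ω) : Prop :=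
  (∀ E ∈ π, E ∈ C) ∧ (π : Set (Set Ω)).PairwiseDisjoint id ∧
    ⋃₀ (π : Set (Set Ω)) = A

/-- The set of partial variation sums of `μ` over finite `C`-partitions of `A`. -/
def varSums (C : Set (Set Ω)) (μ : Set Ω → ℝ) (A : Set Ω) : Set ℝ :=
  {x | ∃ π : Finset (Set Ω), IsPartition C π A ∧ x = ∑ E ∈ π, |μ E|}

/-- The total variation `|μ|(A)`. -/
def totalVar (C : Set (Set Ω)) (μ : Set Ω → ℝ) (A : Set Ω) : ℝ :=
  sSup (varSums C μ A)

/-- The total variation norm `‖μ‖ = |μ|(Ω)`. -/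
def tvNorm (C : Set (Set Ω)) (μ : Set Ω → ℝ) : ℝ :=
  totalVar C μ univ

/-- `μ` has bounded total variation. -/
def BddVar (C : Set (Set Ω)) (μ : Set Ω → ℝ) : Prop :=
  BddAbove (varSums C μ univ)

/-- `μ ∈ ba(C)`: finitely additive with bounded total variation. -/
def Memba (C : Set (Set Ω)) (μ : Set Ω → ℝ) : Prop :=
  IsFinAdd C μ ∧ BddVar C μ

/-- The lattice infimum `μ ∧ ν` in `ba(C)`. -/
def baInf (C : Set (Set Ω)) (μ ν : Set Ω → ℝ) (A : Set Ω) : ℝ :=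
  sInf {x | ∃ B ∈ C, x = μ (A ∩ B) + ν (A ∩ Bᶜ)}

/-- `l` is a finitely additive probability on `C`. -/
def IsFAProb (C : Set (Set Ω)) (l : Set Ω → ℝ) : Prop :=
  Memba C l ∧ (∀ A ∈ C, 0 ≤ l A) ∧ l univ = 1

/-- `ξ ≪ l` : (ε-δ) absolute continuity. -/
def AbsCont (C : Set (Set Ω)) (ξ l : Set Ω → ℝ) : Prop :=
  ∀ ε > (0:ℝ), ∃ δ > (0:ℝ), ∀ A ∈ C, l A < δ → totalVar C ξ A < ε

/-- The tail sets `{F n, F (n+1), ...}` of a sequence of set functions. -/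
def tailSet (F : ℕ → Set Ω → ℝ) (n : ℕ) : Set (Set Ω → ℝ) :=
  {g | ∃ i, n ≤ i ∧ g = F i}

/-!
For every level `k` the truncations `F n ∧ 2ᵏ λ` are dominated by `2ᵏ λ`, so their densities lie in
`L²(λ)`, where the partition sums `∑ μ(E)² / λ(E)` obey the parallelogram law. Weighting the levels
by `8⁻ᵏ` gives one such functional on whole level sequences, and the minimal-norm argument yields
forward convex combinations whose truncations converge in variation at every level at once, to
limits `ξₖ` increasing in `k`; then `ξ = supₖ ξₖ`. Beforehand one passes to a subsequence along
which every `‖F n ∧ 2ᵏ λ‖` converges to some `Lₖ`, with `L_{k₀}` within `δ` of the supremum in the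
statement and `‖F n ∧ 2ⁿ λ‖ ≤ Lₙ + 1/(n+1)`. A set `Bₙ` nearly optimal in the definition of
`(F n ∧ 2ⁿ λ)(Ω)` has `λ(Bₙᶜ) = O(2⁻ⁿ)` and makes `(F n)_{Bₙ}` close to `F n ∧ 2ᵐ λ` for each
fixed `m`; intersecting the `Bᵢ` over the support of a convex combination gives `Aₙ`.
-/

open scoped Topology

namespace IsSetAlg

variable {C : Set (Set Ω)} (hC : IsSetAlg C)
include hC

theorem empty_mem : (∅ : Set Ω) ∈ C := hC.1

theorem compl_mem {A : Set Ω} (hA : A ∈ C) : Aᶜ ∈ C := hC.2.1 A hA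

theorem union_mem {A B : Set Ω} (hA : A ∈ C) (hB : B ∈ C) : A ∪ B ∈ C := hC.2.2 A hA B hB

theorem univ_mem : (univ : Set Ω) ∈ C := by simpa using hC.compl_mem hC.empty_mem

theorem inter_mem {A B : Set Ω} (hA : A ∈ C) (hB : B ∈ C) : A ∩ B ∈ C := by
  simpa using hC.compl_mem (hC.union_mem (hC.compl_mem hA) (hC.compl_mem hB))

theorem diff_mem {A B : Set Ω} (hA : A ∈ C) (hB : B ∈ C) : A \ B ∈ C :=
  hC.inter_mem hA (hC.compl_mem hB)

theorem biUnion_mem {ι : Type*} (s : Finset ι) {B : ι → Set Ω} (hB : ∀ i ∈ s, B i ∈ C) :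
    (⋃ i ∈ s, B i) ∈ C := by
  classical
  induction s using Finset.induction_on with
  | empty => simpa using hC.empty_mem
  | insert i s _ ih =>
    rw [Finset.set_biUnion_insert]
    exact hC.union_mem (hB i (Finset.mem_insert_self i s))
      (ih fun j hj => hB j (Finset.mem_insert_of_mem hj))

theorem biInter_mem {ι : Type*} (s : Finset ι) {B : ι → Set Ω} (hB : ∀ i ∈ s, B i ∈ C) :
    (⋂ i ∈ s, B i) ∈ C := by
  simpa [Set.compl_iUnion] using
    hC.compl_mem (hC.biUnion_mem s fun i hi => hC.compl_mem (hB i hi))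

theorem sUnion_mem {P : Finset (Set Ω)} (hP : ∀ E ∈ P, E ∈ C) : ⋃₀ (P : Set (Set Ω)) ∈ C := by
  simpa [Set.sUnion_eq_biUnion] using hC.biUnion_mem P hP

theorem isPartition_pair {A : Set Ω} (hA : A ∈ C) :
    IsPartition C {A, Aᶜ} univ := by
  refine ⟨by simpa using ⟨hA, hC.compl_mem hA⟩, ?_, by simp⟩
  rw [Finset.coe_pair]
  exact Set.pairwise_pair_of_symm.2 fun _ => disjoint_compl_right

end IsSetAlg

theorem isPartition_singleton {C : Set (Set Ω)} {A : Set Ω} (hA : A ∈ C) : IsPartition C {A} A :=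
  ⟨by simpa using hA, by simp, by simp⟩

namespace IsFinAdd

variable {C : Set (Set Ω)} {μ ν : Set Ω → ℝ} (hC : IsSetAlg C)

section
variable (hμ : IsFinAdd C μ)
include hC hμ

theorem inter_sUnion {D : Set Ω} (hD : D ∈ C) {P : Finset (Set Ω)} (hP : ∀ E ∈ P, E ∈ C)
    (hdis : (P : Set (Set Ω)).PairwiseDisjoint id) :
    μ (D ∩ ⋃₀ (P : Set (Set Ω))) = ∑ E ∈ P, μ (D ∩ E) := by
  classical
  induction P using Finset.induction_on with
  | empty => simpa using hμ.1
  | insert E P hEP ih =>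
    have hP' : ∀ E' ∈ P, E' ∈ C := fun E' h => hP E' (Finset.mem_insert_of_mem h)
    have hdisj : Disjoint (D ∩ E) (D ∩ ⋃₀ (P : Set (Set Ω))) := by
      refine Set.disjoint_of_subset inter_subset_right inter_subset_right ?_
      refine Set.disjoint_sUnion_right.2 fun E' hE' => hdis (by simp) (by simp [hE']) ?_
      rintro rfl
      exact hEP hE'
    rw [Finset.coe_insert, Set.sUnion_insert, Set.inter_union_distrib_left,
      Finset.sum_insert hEP, hμ.2 _ (hC.inter_mem hD (hP E (Finset.mem_insert_self E P))) _
        (hC.inter_mem hD (hC.sUnion_mem hP')) hdisj,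
      ih hP' (hdis.subset (by simp))]

theorem sum_eq {A : Set Ω} {P : Finset (Set Ω)} (hP : IsPartition C P A) :
    ∑ E ∈ P, μ E = μ A := by
  have hA : A ∈ C := hP.2.2 ▸ hC.sUnion_mem hP.1
  have h := hμ.inter_sUnion hC hA hP.1 hP.2.1
  rw [hP.2.2, Set.inter_self] at h
  rw [h]
  refine Finset.sum_congr rfl fun E hE => ?_
  rw [Set.inter_eq_right.2 (hP.2.2 ▸ Set.subset_sUnion_of_mem (Finset.mem_coe.2 hE))]

theorem sum_inter {D : Set Ω} (hD : D ∈ C) {P : Finset (Set Ω)} (hP : IsPartition C P univ) :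
    ∑ E ∈ P, μ (D ∩ E) = μ D := by
  simpa [hP.2.2] using (hμ.inter_sUnion hC hD hP.1 hP.2.1).symm

theorem union_add_diff {A B : Set Ω} (hA : A ∈ C) (hB : B ∈ C) :
    μ (A ∪ B) = μ A + μ (B \ A) := by
  rw [← hμ.2 A hA _ (hC.diff_mem hB hA) disjoint_sdiff_right, Set.union_sdiff_self]

theorem mono (hpos : ∀ A ∈ C, 0 ≤ μ A) {A B : Set Ω} (hA : A ∈ C) (hB : B ∈ C)
    (hAB : A ⊆ B) : μ A ≤ μ B := by
  have h := hμ.union_add_diff hC hA hB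
  rw [Set.union_eq_right.2 hAB] at h
  linarith [hpos _ (hC.diff_mem hB hA)]

theorem biUnion_le (hpos : ∀ A ∈ C, 0 ≤ μ A) {ι : Type*} (s : Finset ι) {B : ι → Set Ω}
    (hB : ∀ i ∈ s, B i ∈ C) : μ (⋃ i ∈ s, B i) ≤ ∑ i ∈ s, μ (B i) := by
  classical
  induction s using Finset.induction_on with
  | empty => simp [hμ.1]
  | insert i s his ih =>
    have hBs : ∀ j ∈ s, B j ∈ C := fun j hj => hB j (Finset.mem_insert_of_mem hj)
    have hBi := hB i (Finset.mem_insert_self i s)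
    have hU := hC.biUnion_mem s hBs
    rw [Finset.set_biUnion_insert, Finset.sum_insert his, hμ.union_add_diff hC hBi hU]
    linarith [ih hBs, hμ.mono hC hpos (hC.diff_mem hU hBi) hU Set.sdiff_subset]

theorem restrict {B : Set Ω} (hB : B ∈ C) : IsFinAdd C (fun A => μ (B ∩ A)) := by
  refine ⟨by simpa using hμ.1, fun A hA A' hA' hd => ?_⟩
  dsimp only
  rw [Set.inter_union_distrib_left]
  exact hμ.2 _ (hC.inter_mem hB hA) _ (hC.inter_mem hB hA')
    (Set.disjoint_of_subset inter_subset_right inter_subset_right hd)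

end

theorem const_mul (hμ : IsFinAdd C μ) (c : ℝ) : IsFinAdd C (fun A => c * μ A) :=
  ⟨by simp [hμ.1], fun A hA B hB hd => by simp only [hμ.2 A hA B hB hd, mul_add]⟩

theorem sub (hμ : IsFinAdd C μ) (hν : IsFinAdd C ν) : IsFinAdd C (fun A => μ A - ν A) :=
  ⟨by simp [hμ.1, hν.1], fun A hA B hB hd => by
    simp only [hμ.2 A hA B hB hd, hν.2 A hA B hB hd]; ring⟩

include hC in
theorem of_tendsto {μ : ℕ → Set Ω → ℝ} (hμ : ∀ n, IsFinAdd C (μ n))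
    (hlim : ∀ A ∈ C, Tendsto (fun n => μ n A) atTop (𝓝 (ν A))) : IsFinAdd C ν := by
  refine ⟨tendsto_nhds_unique (hlim ∅ hC.empty_mem) ?_, fun A hA B hB hd =>
    tendsto_nhds_unique (hlim _ (hC.union_mem hA hB)) ?_⟩
  · simp [(hμ _).1]
  · simpa [(hμ _).2 A hA B hB hd] using (hlim A hA).add (hlim B hB)

end IsFinAdd

theorem convex_setOf_isFinAdd (C : Set (Set Ω)) : Convex ℝ {μ : Set Ω → ℝ | IsFinAdd C μ} := by
  intro μ hμ ν hν a b _ _ _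
  refine ⟨by simp [hμ.1, hν.1], fun A hA B hB hd => ?_⟩
  simp only [Pi.add_apply, Pi.smul_apply, smul_eq_mul, hμ.2 A hA B hB hd, hν.2 A hA B hB hd]
  ring

section Variation

variable {C : Set (Set Ω)} {μ ν : Set Ω → ℝ}

theorem varSums_univ_nonempty (hC : IsSetAlg C) : (varSums C μ univ).Nonempty :=
  ⟨_, {univ}, isPartition_singleton hC.univ_mem, rfl⟩

theorem tvNorm_nonneg (μ : Set Ω → ℝ) : 0 ≤ tvNorm C μ :=
  Real.sSup_nonneg <| by
    rintro _ ⟨P, _, rfl⟩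
    exact Finset.sum_nonneg fun _ _ => abs_nonneg _

theorem varSums_congr (h : ∀ A ∈ C, μ A = ν A) :
    varSums C μ univ = varSums C ν univ := by
  ext x
  constructor <;> rintro ⟨P, hP, rfl⟩ <;>
    exact ⟨P, hP, Finset.sum_congr rfl fun E hE => by rw [h E (hP.1 E hE)]⟩

theorem tvNorm_le_of_mem_upperBounds (hC : IsSetAlg C) {c : ℝ}
    (h : c ∈ upperBounds (varSums C μ univ)) : tvNorm C μ ≤ c :=
  csSup_le (varSums_univ_nonempty hC) h

theorem abs_le_of_mem_upperBounds_varSums (hC : IsSetAlg C) {c : ℝ}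
    (h : c ∈ upperBounds (varSums C μ univ)) {A : Set Ω} (hA : A ∈ C) : |μ A| ≤ c :=
  (Finset.single_le_sum (f := fun E => |μ E|) (fun _ _ => abs_nonneg _)
    (Finset.mem_insert_self A {Aᶜ})).trans (h ⟨_, hC.isPartition_pair hA, rfl⟩)

theorem add_mem_upperBounds_varSums {c d : ℝ} (hμ : c ∈ upperBounds (varSums C μ univ))
    (hν : d ∈ upperBounds (varSums C ν univ)) :
    c + d ∈ upperBounds (varSums C (fun A => μ A + ν A) univ) := by
  rintro _ ⟨P, hP, rfl⟩
  calc ∑ E ∈ P, |μ E + ν E| ≤ ∑ E ∈ P, |μ E| + ∑ E ∈ P, |ν E| := by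
        rw [← Finset.sum_add_distrib]; exact Finset.sum_le_sum fun E _ => abs_add_le _ _
    _ ≤ c + d := add_le_add (hμ ⟨P, hP, rfl⟩) (hν ⟨P, hP, rfl⟩)

theorem sub_mem_upperBounds_varSums {c d : ℝ} (hμ : c ∈ upperBounds (varSums C μ univ))
    (hν : d ∈ upperBounds (varSums C ν univ)) :
    c + d ∈ upperBounds (varSums C (fun A => μ A - ν A) univ) := by
  rintro _ ⟨P, hP, rfl⟩
  calc ∑ E ∈ P, |μ E - ν E| ≤ ∑ E ∈ P, |μ E| + ∑ E ∈ P, |ν E| := by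
        rw [← Finset.sum_add_distrib]; exact Finset.sum_le_sum fun E _ => abs_sub _ _
    _ ≤ c + d := add_le_add (hμ ⟨P, hP, rfl⟩) (hν ⟨P, hP, rfl⟩)

theorem mem_upperBounds_varSums_of_abs_le (hC : IsSetAlg C) {l : Set Ω → ℝ}
    (hl : IsFinAdd C l) {T : ℝ} (h : ∀ A ∈ C, |μ A| ≤ T * l A) :
    T * l univ ∈ upperBounds (varSums C μ univ) := by
  rintro _ ⟨P, hP, rfl⟩
  calc ∑ E ∈ P, |μ E| ≤ ∑ E ∈ P, T * l E := Finset.sum_le_sum fun E hE => h E (hP.1 E hE)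
    _ = T * l univ := by rw [← Finset.mul_sum, hl.sum_eq hC hP]

theorem convex_setOf_mem_upperBounds_varSums (C : Set (Set Ω)) (c : ℝ) :
    Convex ℝ {μ : Set Ω → ℝ | c ∈ upperBounds (varSums C μ univ)} := by
  intro μ hμ ν hν a b ha hb hab
  rintro _ ⟨P, hP, rfl⟩
  calc ∑ E ∈ P, |(a • μ + b • ν) E| ≤ ∑ E ∈ P, (a * |μ E| + b * |ν E|) := by
        refine Finset.sum_le_sum fun E _ => ?_
        rw [← abs_of_nonneg ha, ← abs_of_nonneg hb, ← abs_mul, ← abs_mul, abs_of_nonneg ha,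
          abs_of_nonneg hb]
        exact abs_add_le _ _
    _ = a * ∑ E ∈ P, |μ E| + b * ∑ E ∈ P, |ν E| := by
        rw [Finset.sum_add_distrib, Finset.mul_sum, Finset.mul_sum]
    _ ≤ a * c + b * c := by gcongr; exacts [hμ ⟨P, hP, rfl⟩, hν ⟨P, hP, rfl⟩]
    _ = c := by rw [← add_mul, hab, one_mul]

theorem IsFinAdd.sum_abs_eq (hC : IsSetAlg C) (hμ : IsFinAdd C μ) (hpos : ∀ A ∈ C, 0 ≤ μ A)
    {A : Set Ω} {P : Finset (Set Ω)} (hP : IsPartition C P A) : ∑ E ∈ P, |μ E| = μ A := by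
  rw [Finset.sum_congr rfl fun E hE => abs_of_nonneg (hpos E (hP.1 E hE))]
  exact hμ.sum_eq hC hP

theorem IsFinAdd.mem_upperBounds_varSums (hC : IsSetAlg C) (hμ : IsFinAdd C μ)
    (hpos : ∀ A ∈ C, 0 ≤ μ A) : μ univ ∈ upperBounds (varSums C μ univ) := by
  rintro _ ⟨P, hP, rfl⟩
  exact (hμ.sum_abs_eq hC hpos hP).le

theorem IsFinAdd.totalVar_eq (hC : IsSetAlg C) (hμ : IsFinAdd C μ) (hpos : ∀ A ∈ C, 0 ≤ μ A)
    {A : Set Ω} (hA : A ∈ C) : totalVar C μ A = μ A := by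
  have hS : varSums C μ A = {μ A} := by
    ext x
    constructor
    · rintro ⟨P, hP, rfl⟩
      exact hμ.sum_abs_eq hC hpos hP
    · rintro rfl
      exact ⟨{A}, isPartition_singleton hA, by simp [abs_of_nonneg (hpos A hA)]⟩
  rw [totalVar, hS, csSup_singleton]

theorem exists_tendsto_of_cauchy_varSums (hC : IsSetAlg C) {τ : ℕ → Set Ω → ℝ}
    (hτ : ∀ ε > 0, ∃ N, ∀ r ≥ N, ∀ r' ≥ N,
      ε ∈ upperBounds (varSums C (fun A => τ r A - τ r' A) univ)) :
    ∃ ξ : Set Ω → ℝ, (∀ A ∈ C, Tendsto (fun r => τ r A) atTop (𝓝 (ξ A))) ∧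
      ∀ ε > 0, ∃ N, ∀ r ≥ N, ε ∈ upperBounds (varSums C (fun A => τ r A - ξ A) univ) := by
  have hlim : ∀ A ∈ C, Tendsto (fun r => τ r A) atTop (𝓝 (limUnder atTop fun r => τ r A)) := by
    intro A hA
    refine (Metric.cauchySeq_iff'.2 fun ε hε => ?_).tendsto_limUnder
    obtain ⟨N, hN⟩ := hτ (ε / 2) (half_pos hε)
    exact ⟨N, fun r hr =>
      (abs_le_of_mem_upperBounds_varSums hC (hN r hr N le_rfl) hA).trans_lt (half_lt_self hε)⟩
  refine ⟨_, hlim, fun ε hε => ?_⟩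
  obtain ⟨N, hN⟩ := hτ ε hε
  refine ⟨N, fun r hr => ?_⟩
  rintro _ ⟨P, hP, rfl⟩
  refine le_of_tendsto (tendsto_finsetSum P fun E hE =>
    (tendsto_const_nhds.sub (hlim E (hP.1 E hE))).abs) ?_
  filter_upwards [eventually_ge_atTop N] with r' hr'
  exact hN r hr r' hr' ⟨P, hP, rfl⟩

end Variation

section BaInf

variable {C : Set (Set Ω)} {μ ν : Set Ω → ℝ}

theorem baInf_le (hC : IsSetAlg C) (hμpos : ∀ A ∈ C, 0 ≤ μ A) (hνpos : ∀ A ∈ C, 0 ≤ ν A)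
    {A B : Set Ω} (hA : A ∈ C) (hB : B ∈ C) : baInf C μ ν A ≤ μ (A ∩ B) + ν (A ∩ Bᶜ) := by
  refine csInf_le ⟨0, ?_⟩ ⟨B, hB, rfl⟩
  rintro _ ⟨B', hB', rfl⟩
  exact add_nonneg (hμpos _ (hC.inter_mem hA hB')) (hνpos _ (hC.inter_mem hA (hC.compl_mem hB')))

theorem le_baInf (hC : IsSetAlg C) {A : Set Ω} {x : ℝ}
    (h : ∀ B ∈ C, x ≤ μ (A ∩ B) + ν (A ∩ Bᶜ)) : x ≤ baInf C μ ν A :=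
  le_csInf ⟨_, univ, hC.univ_mem, rfl⟩ (by rintro _ ⟨B, hB, rfl⟩; exact h B hB)

theorem exists_add_lt_baInf_add (hC : IsSetAlg C) {ε : ℝ} (hε : 0 < ε) :
    ∃ B ∈ C, μ B + ν Bᶜ < baInf C μ ν univ + ε := by
  obtain ⟨_, ⟨B, hB, rfl⟩, hlt⟩ :=
    Real.lt_sInf_add_pos (s := {x | ∃ B ∈ C, x = μ (univ ∩ B) + ν (univ ∩ Bᶜ)})
      ⟨_, univ, hC.univ_mem, rfl⟩ hε
  exact ⟨B, hB, by simpa [baInf] using hlt⟩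

section
variable (hC : IsSetAlg C) (hμ : IsFinAdd C μ) (hμpos : ∀ A ∈ C, 0 ≤ μ A)
  (hν : IsFinAdd C ν) (hνpos : ∀ A ∈ C, 0 ≤ ν A)
include hC hμpos hνpos

theorem baInf_nonneg {A : Set Ω} (hA : A ∈ C) : 0 ≤ baInf C μ ν A :=
  le_baInf hC fun _ hB =>
    add_nonneg (hμpos _ (hC.inter_mem hA hB)) (hνpos _ (hC.inter_mem hA (hC.compl_mem hB)))

include hν in
theorem baInf_le_left {A : Set Ω} (hA : A ∈ C) : baInf C μ ν A ≤ μ A := by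
  simpa [hν.1] using baInf_le hC hμpos hνpos hA hC.univ_mem

include hμ in
theorem baInf_le_right {A : Set Ω} (hA : A ∈ C) : baInf C μ ν A ≤ ν A := by
  simpa [hμ.1] using baInf_le hC hμpos hνpos hA hC.empty_mem

theorem baInf_mono_right {ν' : Set Ω → ℝ} (hνν' : ∀ A ∈ C, ν A ≤ ν' A) {A : Set Ω}
    (hA : A ∈ C) : baInf C μ ν A ≤ baInf C μ ν' A :=
  le_baInf hC fun _ hB => (baInf_le hC hμpos hνpos hA hB).trans
    (add_le_add_right (hνν' _ (hC.inter_mem hA (hC.compl_mem hB))) _)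

include hμ hν in
theorem isFinAdd_baInf : IsFinAdd C (baInf C μ ν) := by
  refine ⟨le_antisymm (by simpa [hμ.1] using baInf_le_left hC hμpos hν hνpos hC.empty_mem)
    (baInf_nonneg hC hμpos hνpos hC.empty_mem), fun A hA A' hA' hd => ?_⟩
  have split : ∀ {ρ : Set Ω → ℝ}, IsFinAdd C ρ → ∀ {D : Set Ω}, D ∈ C →
      ρ ((A ∪ A') ∩ D) = ρ (A ∩ D) + ρ (A' ∩ D) := fun hρ D hD => by
    rw [Set.union_inter_distrib_right]
    exact hρ.2 _ (hC.inter_mem hA hD) _ (hC.inter_mem hA' hD)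
      (hd.mono inter_subset_left inter_subset_left)
  refine le_antisymm ?_ (le_baInf hC fun B hB => ?_)
  · have key : ∀ B₁ ∈ C, ∀ B₂ ∈ C, baInf C μ ν (A ∪ A') ≤
        (μ (A ∩ B₁) + ν (A ∩ B₁ᶜ)) + (μ (A' ∩ B₂) + ν (A' ∩ B₂ᶜ)) := by
      intro B₁ hB₁ B₂ hB₂
      have hB : A ∩ B₁ ∪ A' ∩ B₂ ∈ C :=
        hC.union_mem (hC.inter_mem hA hB₁) (hC.inter_mem hA' hB₂)
      have hdx : ∀ x, x ∈ A → x ∉ A' := fun x => @Set.disjoint_left.1 hd x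
      have e₁ : A ∩ (A ∩ B₁ ∪ A' ∩ B₂) = A ∩ B₁ := by ext x; have := hdx x; simp; tauto
      have e₂ : A' ∩ (A ∩ B₁ ∪ A' ∩ B₂) = A' ∩ B₂ := by ext x; have := hdx x; simp; tauto
      have e₃ : A ∩ (A ∩ B₁ ∪ A' ∩ B₂)ᶜ = A ∩ B₁ᶜ := by ext x; have := hdx x; simp; tauto
      have e₄ : A' ∩ (A ∩ B₁ ∪ A' ∩ B₂)ᶜ = A' ∩ B₂ᶜ := by ext x; have := hdx x; simp; tauto
      calc baInf C μ ν (A ∪ A') ≤ μ ((A ∪ A') ∩ (A ∩ B₁ ∪ A' ∩ B₂)) +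
            ν ((A ∪ A') ∩ (A ∩ B₁ ∪ A' ∩ B₂)ᶜ) :=
            baInf_le hC hμpos hνpos (hC.union_mem hA hA') hB
        _ = _ := by rw [split hμ hB, split hν (hC.compl_mem hB), e₁, e₂, e₃, e₄]; ring
    have h₁ : ∀ B₁ ∈ C, baInf C μ ν (A ∪ A') - (μ (A ∩ B₁) + ν (A ∩ B₁ᶜ)) ≤ baInf C μ ν A' :=
      fun B₁ hB₁ => le_baInf hC fun B₂ hB₂ => by linarith [key B₁ hB₁ B₂ hB₂]
    have h₂ : baInf C μ ν (A ∪ A') - baInf C μ ν A' ≤ baInf C μ ν A :=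
      le_baInf hC fun B₁ hB₁ => by linarith [h₁ B₁ hB₁]
    linarith
  · rw [split hμ hB, split hν (hC.compl_mem hB)]
    linarith [baInf_le hC hμpos hνpos hA hB, baInf_le hC hμpos hνpos hA' hB]

include hμ hν in
/-- The bound is small when `B` is nearly optimal in the definition of `(μ ∧ ν)(Ω)`: on `B` the two
set functions differ by `μ - μ ∧ ν ≥ 0`, on `Bᶜ` by `μ ∧ ν ≤ ν`. -/
theorem restrict_sub_baInf_mem_upperBounds {B : Set Ω} (hB : B ∈ C) :
    μ B - baInf C μ ν univ + 2 * ν Bᶜ ∈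
      upperBounds (varSums C (fun A => μ (B ∩ A) - baInf C μ ν A) univ) := by
  have hm := isFinAdd_baInf hC hμ hμpos hν hνpos
  have hBc := hC.compl_mem hB
  have hsplit : ∀ {E}, E ∈ C → baInf C μ ν E = baInf C μ ν (B ∩ E) + baInf C μ ν (Bᶜ ∩ E) :=
    fun {E} hE => by
      rw [← hm.2 _ (hC.inter_mem hB hE) _ (hC.inter_mem hBc hE)
        (disjoint_compl_right.mono inter_subset_left inter_subset_left),
        ← Set.union_inter_distrib_right, Set.union_compl_self, Set.univ_inter]
  rintro _ ⟨P, hP, rfl⟩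
  have hterm : ∀ E ∈ P, |μ (B ∩ E) - baInf C μ ν E| ≤
      (μ (B ∩ E) - baInf C μ ν (B ∩ E)) + baInf C μ ν (Bᶜ ∩ E) := by
    intro E hE
    have hEC := hP.1 E hE
    rw [hsplit hEC, abs_le]
    have := baInf_le_left hC hμpos hν hνpos (hC.inter_mem hB hEC)
    have := baInf_nonneg hC hμpos hνpos (hC.inter_mem hBc hEC)
    constructor <;> linarith
  calc ∑ E ∈ P, |μ (B ∩ E) - baInf C μ ν E|
      ≤ ∑ E ∈ P, ((μ (B ∩ E) - baInf C μ ν (B ∩ E)) + baInf C μ ν (Bᶜ ∩ E)) :=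
        Finset.sum_le_sum hterm
    _ = μ B - baInf C μ ν B + baInf C μ ν Bᶜ := by
        rw [Finset.sum_add_distrib, Finset.sum_sub_distrib, hμ.sum_inter hC hB hP,
          hm.sum_inter hC hB hP, hm.sum_inter hC hBc hP]
    _ ≤ _ := by
        have := hsplit hC.univ_mem
        simp only [Set.inter_univ] at this
        linarith [baInf_le_right hC hμ hμpos hνpos hBc]

end

end BaInf

theorem sq_sum_div_le_sum_sq_div_of_nonneg {ι : Type*} (s : Finset ι) (f g : ι → ℝ)
    (hg : ∀ i ∈ s, 0 ≤ g i) (hfg : ∀ i ∈ s, g i = 0 → f i = 0) :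
    (∑ i ∈ s, f i) ^ 2 / ∑ i ∈ s, g i ≤ ∑ i ∈ s, f i ^ 2 / g i := by
  classical
  have hpos : ∀ i ∈ s, g i ≠ 0 → 0 < g i := fun i hi h => (hg i hi).lt_of_ne' h
  have key := Finset.sq_sum_div_le_sum_sq_div (s.filter fun i => 0 < g i) f (g := g)
    fun i hi => (Finset.mem_filter.1 hi).2
  rwa [Finset.sum_filter_of_ne fun i hi hf => hpos i hi fun h0 => hf (hfg i hi h0),
    Finset.sum_filter_of_ne fun i hi hgi => hpos i hi hgi,
    Finset.sum_filter_of_ne fun i hi hq => hpos i hi fun h0 => hq (by simp [h0])] at key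

section SqNorm

variable {C : Set (Set Ω)} {l τ : Set Ω → ℝ} {T : ℝ}

def IsDominated (C : Set (Set Ω)) (T : ℝ) (l τ : Set Ω → ℝ) : Prop :=
  ∀ A ∈ C, |τ A| ≤ T * l A

theorem IsDominated.eq_zero (hτ : IsDominated C T l τ) {A : Set Ω} (hA : A ∈ C)
    (h0 : l A = 0) : τ A = 0 := by
  simpa [h0] using hτ A hA

theorem convex_setOf_isDominated (C : Set (Set Ω)) (T : ℝ) (l : Set Ω → ℝ) :
    Convex ℝ {τ | IsDominated C T l τ} := by
  intro τ hτ σ hσ a b ha hb hab A hA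
  calc |(a • τ + b • σ) A| ≤ a * |τ A| + b * |σ A| := by
        rw [← abs_of_nonneg ha, ← abs_of_nonneg hb, ← abs_mul, ← abs_mul, abs_of_nonneg ha,
          abs_of_nonneg hb]
        exact abs_add_le _ _
    _ ≤ a * (T * l A) + b * (T * l A) := by gcongr; exacts [hτ A hA, hσ A hA]
    _ = T * l A := by rw [← add_mul, hab, one_mul]

/-- Partition sums of `∑ τ(E)² / l(E)`, whose supremum `sqNorm` is the squared `L²(l)` norm of the
density `dτ/dl`; a cell with `l E = 0` contributes `0`, as `x / 0 = 0`. -/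
def sqSums (C : Set (Set Ω)) (l τ : Set Ω → ℝ) : Set ℝ :=
  {x | ∃ P : Finset (Set Ω), IsPartition C P univ ∧ x = ∑ E ∈ P, τ E ^ 2 / l E}

def sqNorm (C : Set (Set Ω)) (l τ : Set Ω → ℝ) : ℝ :=
  sSup (sqSums C l τ)

theorem sqSums_nonempty (hC : IsSetAlg C) : (sqSums C l τ).Nonempty :=
  ⟨_, {univ}, isPartition_singleton hC.univ_mem, rfl⟩

theorem sqNorm_nonneg (hlpos : ∀ A ∈ C, 0 ≤ l A) : 0 ≤ sqNorm C l τ :=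
  Real.sSup_nonneg <| by
    rintro _ ⟨P, hP, rfl⟩
    exact Finset.sum_nonneg fun E hE => div_nonneg (sq_nonneg _) (hlpos _ (hP.1 E hE))

theorem sum_sq_div_le (hC : IsSetAlg C) (hl : IsFinAdd C l) (hlpos : ∀ A ∈ C, 0 ≤ l A)
    (hτ : IsDominated C T l τ) {P : Finset (Set Ω)} (hP : IsPartition C P univ) :
    ∑ E ∈ P, τ E ^ 2 / l E ≤ T * (T * l univ) := by
  rw [← hl.sum_eq hC hP, Finset.mul_sum, Finset.mul_sum]
  refine Finset.sum_le_sum fun E hE => ?_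
  have hEC := hP.1 E hE
  rcases (hlpos E hEC).eq_or_lt with h0 | h0
  · simp [← h0]
  · rw [div_le_iff₀ h0, ← sq_abs]
    nlinarith [abs_nonneg (τ E), hτ E hEC]

theorem sqSums_bddAbove (hC : IsSetAlg C) (hl : IsFinAdd C l) (hlpos : ∀ A ∈ C, 0 ≤ l A)
    (hτ : IsDominated C T l τ) : BddAbove (sqSums C l τ) :=
  ⟨_, by rintro _ ⟨P, hP, rfl⟩; exact sum_sq_div_le hC hl hlpos hτ hP⟩

theorem sqNorm_le (hC : IsSetAlg C) (hl : IsFinAdd C l) (hlpos : ∀ A ∈ C, 0 ≤ l A)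
    (hτ : IsDominated C T l τ) : sqNorm C l τ ≤ T * (T * l univ) :=
  csSup_le (sqSums_nonempty hC) (by rintro _ ⟨P, hP, rfl⟩; exact sum_sq_div_le hC hl hlpos hτ hP)

theorem sqrt_sqNorm_mem_upperBounds_varSums (hC : IsSetAlg C) (hl : IsFinAdd C l)
    (hlpos : ∀ A ∈ C, 0 ≤ l A) (hτ : IsDominated C T l τ) :
    √(sqNorm C l τ * l univ) ∈ upperBounds (varSums C τ univ) := by
  rintro _ ⟨P, hP, rfl⟩
  rcases (hlpos _ hC.univ_mem).eq_or_lt with h0 | h0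
  · have := mem_upperBounds_varSums_of_abs_le hC hl hτ ⟨P, hP, rfl⟩
    rw [← h0, mul_zero] at this
    exact this.trans (Real.sqrt_nonneg _)
  have hCS := sq_sum_div_le_sum_sq_div_of_nonneg P (fun E => |τ E|) l
    (fun E hE => hlpos _ (hP.1 E hE)) fun E hE h0 => by simp [hτ.eq_zero (hP.1 E hE) h0]
  simp only [sq_abs] at hCS
  rw [hl.sum_eq hC hP, div_le_iff₀ h0] at hCS
  have hle := le_csSup (sqSums_bddAbove hC hl hlpos hτ) ⟨P, hP, rfl⟩
  exact Real.le_sqrt_of_sq_le (hCS.trans (mul_le_mul_of_nonneg_right hle h0.le))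

open Classical in
def commonRefinement (P Q : Finset (Set Ω)) : Finset (Set Ω) :=
  (P ×ˢ Q).image fun p => p.1 ∩ p.2

theorem commonRefinement_comm (P Q : Finset (Set Ω)) :
    commonRefinement P Q = commonRefinement Q P := by
  ext E
  simp only [commonRefinement, Finset.mem_image, Finset.mem_product, Prod.exists]
  constructor <;> rintro ⟨a, b, ⟨ha, hb⟩, rfl⟩ <;> exact ⟨b, a, ⟨hb, ha⟩, Set.inter_comm _ _⟩

theorem pairwiseDisjoint_inter_of_isPartition {P Q : Finset (Set Ω)} {A B : Set Ω}
    (hP : IsPartition C P A) (hQ : IsPartition C Q B) :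
    ((P ×ˢ Q : Finset _) : Set (Set Ω × Set Ω)).PairwiseDisjoint fun p => p.1 ∩ p.2 := by
  rintro ⟨E, F⟩ hEF ⟨E', F'⟩ hEF' hne
  simp only [Finset.coe_product, Set.mem_prod, Finset.mem_coe] at hEF hEF'
  by_cases hE : E = E'
  · subst hE
    exact (hQ.2.1 hEF.2 hEF'.2 fun h => hne (by rw [h])).mono inter_subset_right
      inter_subset_right
  · exact (hP.2.1 hEF.1 hEF'.1 hE).mono inter_subset_left inter_subset_left

theorem isPartition_commonRefinement (hC : IsSetAlg C) {P Q : Finset (Set Ω)}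
    (hP : IsPartition C P univ) (hQ : IsPartition C Q univ) :
    IsPartition C (commonRefinement P Q) univ := by
  classical
  refine ⟨?_, ?_, ?_⟩
  · intro E hE
    obtain ⟨p, hp, rfl⟩ := Finset.mem_image.1 hE
    rw [Finset.mem_product] at hp
    exact hC.inter_mem (hP.1 _ hp.1) (hQ.1 _ hp.2)
  · rw [commonRefinement, Finset.coe_image]
    rintro _ ⟨p, hp, rfl⟩ _ ⟨q, hq, rfl⟩ hpq
    exact pairwiseDisjoint_inter_of_isPartition hP hQ hp hq fun h => hpq (by rw [h])
  · refine Set.eq_univ_of_forall fun x => ?_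
    obtain ⟨E, hE, hxE⟩ := Set.mem_sUnion.1 (hP.2.2.symm ▸ Set.mem_univ x)
    obtain ⟨F, hF, hxF⟩ := Set.mem_sUnion.1 (hQ.2.2.symm ▸ Set.mem_univ x)
    exact ⟨E ∩ F, Finset.mem_coe.2 (Finset.mem_image.2 ⟨(E, F), Finset.mem_product.2 ⟨hE, hF⟩,
      rfl⟩), hxE, hxF⟩

theorem sum_commonRefinement {P Q : Finset (Set Ω)} {A B : Set Ω} (hP : IsPartition C P A)
    (hQ : IsPartition C Q B) (g : Set Ω → ℝ) (hg : g ∅ = 0) :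
    ∑ E ∈ commonRefinement P Q, g E = ∑ E ∈ P, ∑ F ∈ Q, g (E ∩ F) := by
  classical
  rw [commonRefinement,
    Finset.sum_image_of_disjoint hg (pairwiseDisjoint_inter_of_isPartition hP hQ),
    Finset.sum_product]

theorem sum_sq_div_le_commonRefinement (hC : IsSetAlg C) (hl : IsFinAdd C l)
    (hlpos : ∀ A ∈ C, 0 ≤ l A) (hτ : IsFinAdd C τ) (hτl : IsDominated C T l τ)
    {P Q : Finset (Set Ω)} (hP : IsPartition C P univ) (hQ : IsPartition C Q univ) :
    ∑ E ∈ P, τ E ^ 2 / l E ≤ ∑ E ∈ commonRefinement P Q, τ E ^ 2 / l E := by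
  rw [sum_commonRefinement hP hQ _ (by simp [hτ.1])]
  refine Finset.sum_le_sum fun E hE => ?_
  have hEC := hP.1 E hE
  rw [← hτ.sum_inter hC hEC hQ, ← hl.sum_inter hC hEC hQ]
  exact sq_sum_div_le_sum_sq_div_of_nonneg _ _ _
    (fun F hF => hlpos _ (hC.inter_mem hEC (hQ.1 F hF)))
    fun F hF => hτl.eq_zero (hC.inter_mem hEC (hQ.1 F hF))

theorem sqNorm_sub_le (hC : IsSetAlg C) (hl : IsFinAdd C l) (hlpos : ∀ A ∈ C, 0 ≤ l A)
    {x y : Set Ω → ℝ} (hx : IsFinAdd C x) (hy : IsFinAdd C y) (hxl : IsDominated C T l x)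
    (hyl : IsDominated C T l y) :
    sqNorm C l (x - y) ≤
      2 * sqNorm C l x + 2 * sqNorm C l y - 4 * sqNorm C l (midpoint ℝ x y) := by
  have hd : IsFinAdd C (x - y) := hx.sub hy
  have hdl : IsDominated C (T + T) l (x - y) := fun A hA =>
    (abs_sub _ _).trans (by rw [add_mul]; exact add_le_add (hxl A hA) (hyl A hA))
  have hm : IsFinAdd C (midpoint ℝ x y) := (convex_setOf_isFinAdd C).midpoint_mem hx hy
  have hml : IsDominated C T l (midpoint ℝ x y) :=
    (convex_setOf_isDominated C T l).midpoint_mem hxl hyl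
  refine le_of_forall_pos_le_add fun ε hε => ?_
  obtain ⟨_, ⟨P, hP, rfl⟩, hPd⟩ :=
    exists_lt_of_lt_csSup (sqSums_nonempty hC) (sub_lt_self (sqNorm C l (x - y)) (half_pos hε))
  obtain ⟨_, ⟨Q, hQ, rfl⟩, hQm⟩ := exists_lt_of_lt_csSup (sqSums_nonempty hC)
    (sub_lt_self (sqNorm C l (midpoint ℝ x y)) (div_pos hε (by norm_num : (0 : ℝ) < 8)))
  have hR := isPartition_commonRefinement hC hP hQ
  have h₁ := sum_sq_div_le_commonRefinement hC hl hlpos hd hdl hP hQ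
  have h₂ := sum_sq_div_le_commonRefinement hC hl hlpos hm hml hQ hP
  rw [commonRefinement_comm] at h₂
  have hx' : _ ≤ sqNorm C l x := le_csSup (sqSums_bddAbove hC hl hlpos hxl) ⟨_, hR, rfl⟩
  have hy' : _ ≤ sqNorm C l y := le_csSup (sqSums_bddAbove hC hl hlpos hyl) ⟨_, hR, rfl⟩
  have hid : ∑ E ∈ commonRefinement P Q, (x - y) E ^ 2 / l E =
      2 * ∑ E ∈ commonRefinement P Q, x E ^ 2 / l E +
        2 * ∑ E ∈ commonRefinement P Q, y E ^ 2 / l E -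
          4 * ∑ E ∈ commonRefinement P Q, (midpoint ℝ x y) E ^ 2 / l E := by
    rw [Finset.mul_sum, Finset.mul_sum, Finset.mul_sum, ← Finset.sum_add_distrib,
      ← Finset.sum_sub_distrib]
    refine Finset.sum_congr rfl fun E _ => ?_
    simp only [Pi.sub_apply, midpoint_eq_smul_add, invOf_eq_inv, Pi.smul_apply, Pi.add_apply,
      smul_eq_mul]
    ring
  linarith

end SqNorm

/-- The minimal-norm argument: near-minimisers are Cauchy because the midpoint of two of them is
again a competitor. -/
theorem exists_cauchy_of_parallelogram {E : Type*} [AddCommGroup E] [Module ℝ E]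
    {K : ℕ → Set E} {Q : E → ℝ} (hK : Antitone K) (hKconv : ∀ r, Convex ℝ (K r))
    (hQ0 : ∀ y ∈ K 0, 0 ≤ Q y)
    (hpar : ∀ y ∈ K 0, ∀ z ∈ K 0, Q (y - z) ≤ 2 * Q y + 2 * Q z - 4 * Q (midpoint ℝ y z))
    {b : ℝ} (hb : ∀ r, ∃ y ∈ K r, Q y ≤ b) :
    ∃ y : ℕ → E, (∀ r, y r ∈ K r) ∧ ∀ ε > 0, ∃ N, ∀ r ≥ N, ∀ r' ≥ N, Q (y r - y r') ≤ ε := by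
  set D : ℕ → ℝ := fun r => sInf (Q '' K r)
  have hbdd : ∀ r, BddBelow (Q '' K r) := fun r =>
    ⟨0, by rintro _ ⟨y, hy, rfl⟩; exact hQ0 y (hK (Nat.zero_le r) hy)⟩
  have hne : ∀ r, (Q '' K r).Nonempty := fun r =>
    let ⟨y, hy, _⟩ := hb r
    ⟨_, y, hy, rfl⟩
  have hDle : ∀ r, ∀ y ∈ K r, D r ≤ Q y := fun r y hy => csInf_le (hbdd r) ⟨y, hy, rfl⟩
  have hDb : BddAbove (Set.range D) := ⟨b, by
    rintro _ ⟨r, rfl⟩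
    obtain ⟨y, hy, hyb⟩ := hb r
    exact (hDle r y hy).trans hyb⟩
  have hDmono : Monotone D := fun r r' h =>
    csInf_le_csInf (hbdd r) (hne r') (Set.image_mono (hK h))
  have hlim : Tendsto (fun N : ℕ => 4 * ((⨆ r, D r) - D N) + 4 * (1 / ((N : ℝ) + 1)))
      atTop (𝓝 0) := by
    simpa using (((tendsto_const_nhds (x := ⨆ r, D r)).sub
      (tendsto_atTop_ciSup hDmono hDb)).const_mul 4).add
      ((tendsto_one_div_add_atTop_nhds_zero_nat (𝕜 := ℝ)).const_mul 4)
  have hy : ∀ r, ∃ y ∈ K r, Q y < D r + 1 / ((r : ℝ) + 1) := fun r => by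
    obtain ⟨_, ⟨y, hy, rfl⟩, hlt⟩ := Real.lt_sInf_add_pos (hne r) Nat.one_div_pos_of_nat
    exact ⟨y, hy, hlt⟩
  choose y hyK hyQ using hy
  refine ⟨y, hyK, fun ε hε => ?_⟩
  obtain ⟨N, hN⟩ := (hlim.eventually (gt_mem_nhds hε)).exists
  refine ⟨N, fun r hr r' hr' => ?_⟩
  have hmid := hDle N _ ((hKconv N).midpoint_mem (hK hr (hyK r)) (hK hr' (hyK r')))
  have hpar' := hpar _ (hK (Nat.zero_le r) (hyK r)) _ (hK (Nat.zero_le r') (hyK r'))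
  have hr₁ : 1 / ((r : ℝ) + 1) ≤ 1 / ((N : ℝ) + 1) := Nat.one_div_le_one_div hr
  have hr₂ : 1 / ((r' : ℝ) + 1) ≤ 1 / ((N : ℝ) + 1) := Nat.one_div_le_one_div hr'
  linarith [hyQ r, hyQ r', le_ciSup hDb r, le_ciSup hDb r']

section Levels

variable {C : Set (Set Ω)} {l : Set Ω → ℝ} {F : ℕ → Set Ω → ℝ}

def dyadicTrunc (C : Set (Set Ω)) (l : Set Ω → ℝ) (k : ℕ) (μ : Set Ω → ℝ) : Set Ω → ℝ :=
  baInf C μ fun B => (2 : ℝ) ^ k * l B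

section
variable (hC : IsSetAlg C) (hlpos : ∀ A ∈ C, 0 ≤ l A) {μ : Set Ω → ℝ}
  (hμpos : ∀ A ∈ C, 0 ≤ μ A) (k : ℕ) {A : Set Ω} (hA : A ∈ C)
include hC hlpos hμpos hA

theorem dyadicTrunc_nonneg : 0 ≤ dyadicTrunc C l k μ A :=
  baInf_nonneg hC hμpos (fun B hB => mul_nonneg (by positivity) (hlpos B hB)) hA

theorem dyadicTrunc_le_self (hl : IsFinAdd C l) : dyadicTrunc C l k μ A ≤ μ A :=
  baInf_le_left hC hμpos (hl.const_mul _) (fun B hB => mul_nonneg (by positivity) (hlpos B hB)) hA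

theorem dyadicTrunc_le (hμ : IsFinAdd C μ) : dyadicTrunc C l k μ A ≤ 2 ^ k * l A :=
  baInf_le_right hC hμ hμpos (fun B hB => mul_nonneg (by positivity) (hlpos B hB)) hA

end

theorem isFinAdd_dyadicTrunc (hC : IsSetAlg C) (hl : IsFinAdd C l) (hlpos : ∀ A ∈ C, 0 ≤ l A)
    {μ : Set Ω → ℝ} (hμ : IsFinAdd C μ) (hμpos : ∀ A ∈ C, 0 ≤ μ A) (k : ℕ) :
    IsFinAdd C (dyadicTrunc C l k μ) :=
  isFinAdd_baInf hC hμ hμpos (hl.const_mul _) fun B hB => mul_nonneg (by positivity) (hlpos B hB)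

theorem tvNorm_dyadicTrunc (hC : IsSetAlg C) (hl : IsFinAdd C l) (hlpos : ∀ A ∈ C, 0 ≤ l A)
    {μ : Set Ω → ℝ} (hμ : IsFinAdd C μ) (hμpos : ∀ A ∈ C, 0 ≤ μ A) (k : ℕ) :
    tvNorm C (dyadicTrunc C l k μ) = dyadicTrunc C l k μ univ :=
  (isFinAdd_dyadicTrunc hC hl hlpos hμ hμpos k).totalVar_eq hC
    (fun _ hA => dyadicTrunc_nonneg hC hlpos hμpos k hA) hC.univ_mem

/-- Level sequences `(ξₖ)ₖ` of the shape of `(μ ∧ 2ᵏ l)ₖ` for `μ ∈ ba(C)₊`. -/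
def levelSet (C : Set (Set Ω)) (l : Set Ω → ℝ) : Set (ℕ → Set Ω → ℝ) :=
  {y | ∀ k, IsFinAdd C (y k) ∧ (∀ A ∈ C, 0 ≤ y k A) ∧ IsDominated C (2 ^ k) l (y k) ∧
    ∀ A ∈ C, y k A ≤ y (k + 1) A}

/-- Carrying `F i` along with all its truncations makes one convex combination act on `F` and on
every level with the same weights. -/
def levelVec (C : Set (Set Ω)) (l : Set Ω → ℝ) (F : ℕ → Set Ω → ℝ) (i : ℕ) :
    (Set Ω → ℝ) × (ℕ → Set Ω → ℝ) :=
  (F i, fun k => dyadicTrunc C l k (F i))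

/-- The weights `8⁻ᵏ` make the series converge on `levelSet`, where level `k` is dominated
by `2ᵏ l`. -/
def levelEnergy (C : Set (Set Ω)) (l : Set Ω → ℝ) (y : ℕ → Set Ω → ℝ) : ℝ :=
  ∑' k, (1 / 8 : ℝ) ^ k * sqNorm C l (y k)

theorem convex_levelSet (C : Set (Set Ω)) (l : Set Ω → ℝ) : Convex ℝ (levelSet C l) := by
  intro y hy z hz a b ha hb hab k
  obtain ⟨hy₁, hy₂, hy₃, hy₄⟩ := hy k
  obtain ⟨hz₁, hz₂, hz₃, hz₄⟩ := hz k
  refine ⟨convex_setOf_isFinAdd C hy₁ hz₁ ha hb hab, fun A hA => ?_,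
    convex_setOf_isDominated C _ l hy₃ hz₃ ha hb hab, fun A hA => ?_⟩
  · simp only [Pi.add_apply, Pi.smul_apply, smul_eq_mul]
    exact add_nonneg (mul_nonneg ha (hy₂ A hA)) (mul_nonneg hb (hz₂ A hA))
  · simp only [Pi.add_apply, Pi.smul_apply, smul_eq_mul]
    exact add_le_add (mul_le_mul_of_nonneg_left (hy₄ A hA) ha)
      (mul_le_mul_of_nonneg_left (hz₄ A hA) hb)

theorem levelSet_of_tendsto (hC : IsSetAlg C) {y : ℕ → ℕ → Set Ω → ℝ} {ξ : ℕ → Set Ω → ℝ}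
    (hy : ∀ r, y r ∈ levelSet C l)
    (hlim : ∀ k, ∀ A ∈ C, Tendsto (fun r => y r k A) atTop (𝓝 (ξ k A))) : ξ ∈ levelSet C l :=
  fun k => ⟨IsFinAdd.of_tendsto hC (fun r => (hy r k).1) (hlim k),
    fun A hA => ge_of_tendsto' (hlim k A hA) fun r => (hy r k).2.1 A hA,
    fun A hA => le_of_tendsto' (hlim k A hA).abs fun r => (hy r k).2.2.1 A hA,
    fun A hA => le_of_tendsto_of_tendsto' (hlim k A hA) (hlim (k + 1) A hA)
      fun r => (hy r k).2.2.2 A hA⟩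

theorem levelVec_mem_levelSet (hC : IsSetAlg C) (hl : IsFinAdd C l) (hlpos : ∀ A ∈ C, 0 ≤ l A)
    (hF : ∀ n, IsFinAdd C (F n)) (hFpos : ∀ n, ∀ A ∈ C, 0 ≤ F n A) (i : ℕ) :
    (levelVec C l F i).2 ∈ levelSet C l := fun k =>
  ⟨isFinAdd_dyadicTrunc hC hl hlpos (hF i) (hFpos i) k,
    fun A hA => dyadicTrunc_nonneg hC hlpos (hFpos i) k hA,
    fun A hA => (abs_of_nonneg (dyadicTrunc_nonneg hC hlpos (hFpos i) k hA)).trans_le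
      (dyadicTrunc_le hC hlpos (hFpos i) k hA (hF i)),
    fun A hA => baInf_mono_right hC (hFpos i) (fun B hB => mul_nonneg (by positivity) (hlpos B hB))
      (fun B hB => mul_le_mul_of_nonneg_right (pow_le_pow_right₀ (by norm_num) (Nat.le_succ k))
        (hlpos B hB)) hA⟩

theorem levelEnergy_term_le (hC : IsSetAlg C) (hl : IsFinAdd C l) (hlpos : ∀ A ∈ C, 0 ≤ l A)
    {τ : Set Ω → ℝ} {c : ℝ} {k : ℕ} (hτ : IsDominated C (c * 2 ^ k) l τ) :
    (1 / 8 : ℝ) ^ k * sqNorm C l τ ≤ c ^ 2 * l univ * (1 / 2) ^ k := by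
  have h8 : (1 / 8 : ℝ) ^ k * 2 ^ k * 2 ^ k = (1 / 2) ^ k := by
    rw [← mul_pow, ← mul_pow]; norm_num
  calc (1 / 8 : ℝ) ^ k * sqNorm C l τ ≤ (1 / 8) ^ k * (c * 2 ^ k * (c * 2 ^ k * l univ)) :=
        mul_le_mul_of_nonneg_left (sqNorm_le hC hl hlpos hτ) (by positivity)
    _ = c ^ 2 * l univ * (1 / 2) ^ k := by linear_combination c ^ 2 * l univ * h8

theorem summable_levelEnergy (hC : IsSetAlg C) (hl : IsFinAdd C l) (hlpos : ∀ A ∈ C, 0 ≤ l A)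
    {y : ℕ → Set Ω → ℝ} {c : ℝ} (hy : ∀ k, IsDominated C (c * 2 ^ k) l (y k)) :
    Summable fun k => (1 / 8 : ℝ) ^ k * sqNorm C l (y k) :=
  Summable.of_nonneg_of_le (fun _ => mul_nonneg (by positivity) (sqNorm_nonneg hlpos))
    (fun k => levelEnergy_term_le hC hl hlpos (hy k))
    ((summable_geometric_of_lt_one (by norm_num) (by norm_num)).mul_left _)

theorem isDominated_of_mem_levelSet {y : ℕ → Set Ω → ℝ} (hy : y ∈ levelSet C l) (k : ℕ) :
    IsDominated C (1 * 2 ^ k) l (y k) := by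
  simpa using (hy k).2.2.1

theorem isDominated_sub_of_mem_levelSet {y z : ℕ → Set Ω → ℝ} (hy : y ∈ levelSet C l)
    (hz : z ∈ levelSet C l) (k : ℕ) : IsDominated C (2 * 2 ^ k) l ((y - z) k) := fun A hA =>
  (abs_sub _ _).trans (by linarith [(hy k).2.2.1 A hA, (hz k).2.2.1 A hA])

theorem levelEnergy_le (hC : IsSetAlg C) (hl : IsFinAdd C l) (hlpos : ∀ A ∈ C, 0 ≤ l A)
    {y : ℕ → Set Ω → ℝ} (hy : y ∈ levelSet C l) : levelEnergy C l y ≤ 2 * l univ := by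
  calc levelEnergy C l y ≤ ∑' k : ℕ, 1 ^ 2 * l univ * (1 / 2 : ℝ) ^ k :=
        (summable_levelEnergy hC hl hlpos (isDominated_of_mem_levelSet hy)).tsum_le_tsum
          (fun k => levelEnergy_term_le hC hl hlpos (isDominated_of_mem_levelSet hy k))
          ((summable_geometric_of_lt_one (by norm_num) (by norm_num)).mul_left _)
    _ = 2 * l univ := by rw [tsum_mul_left, tsum_geometric_two]; ring

theorem levelEnergy_sub_le (hC : IsSetAlg C) (hl : IsFinAdd C l) (hlpos : ∀ A ∈ C, 0 ≤ l A)
    {y z : ℕ → Set Ω → ℝ} (hy : y ∈ levelSet C l) (hz : z ∈ levelSet C l) :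
    levelEnergy C l (y - z) ≤
      2 * levelEnergy C l y + 2 * levelEnergy C l z - 4 * levelEnergy C l (midpoint ℝ y z) := by
  have hS := fun {w : ℕ → Set Ω → ℝ} (hw : w ∈ levelSet C l) =>
    summable_levelEnergy hC hl hlpos (isDominated_of_mem_levelSet hw)
  have hm := (convex_levelSet C l).midpoint_mem hy hz
  unfold levelEnergy
  rw [← tsum_mul_left, ← tsum_mul_left, ← tsum_mul_left, ← ((hS hy).mul_left 2).tsum_add
    ((hS hz).mul_left 2), ← (((hS hy).mul_left 2).add ((hS hz).mul_left 2)).tsum_sub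
    ((hS hm).mul_left 4)]
  refine Summable.tsum_le_tsum (fun k => ?_)
    (summable_levelEnergy hC hl hlpos (isDominated_sub_of_mem_levelSet hy hz))
    ((((hS hy).mul_left 2).add ((hS hz).mul_left 2)).sub ((hS hm).mul_left 4))
  have h := sqNorm_sub_le hC hl hlpos (hy k).1 (hz k).1 (hy k).2.2.1 (hz k).2.2.1
  have hmk : (midpoint ℝ y z) k = midpoint ℝ (y k) (z k) := by simp [midpoint_eq_smul_add]
  rw [Pi.sub_apply, hmk]
  have h8 : (0 : ℝ) ≤ (1 / 8) ^ k := by positivity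
  nlinarith

end Levels

theorem tendsto_of_mem_convexHull {E : Type*} [AddCommGroup E] [Module ℝ E] {x y : ℕ → E}
    (φ : E →ₗ[ℝ] ℝ) {a : ℝ} (hx : Tendsto (fun i => φ (x i)) atTop (𝓝 a))
    (hy : ∀ r, ∃ R, y r ∈ convexHull ℝ (x '' Icc r R)) :
    Tendsto (fun r => φ (y r)) atTop (𝓝 a) := by
  refine Metric.nhds_basis_closedBall.tendsto_right_iff.2 fun η hη => ?_
  obtain ⟨N, hN⟩ := eventually_atTop.1 (Metric.nhds_basis_closedBall.tendsto_right_iff.1 hx η hη)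
  filter_upwards [eventually_ge_atTop N] with r hr
  obtain ⟨R, hR⟩ := hy r
  refine convexHull_min ?_ ((convex_closedBall a η).linear_preimage φ) hR
  rintro _ ⟨i, hi, rfl⟩
  exact hN i (hr.trans hi.1)

section Levels

variable {C : Set (Set Ω)} {l : Set Ω → ℝ} {F : ℕ → Set Ω → ℝ}

theorem convexHull_levelVec_subset (hC : IsSetAlg C) (hl : IsFinAdd C l)
    (hlpos : ∀ A ∈ C, 0 ≤ l A) (hF : ∀ n, IsFinAdd C (F n)) (hFpos : ∀ n, ∀ A ∈ C, 0 ≤ F n A)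
    (s : Set ℕ) : convexHull ℝ (levelVec C l F '' s) ⊆ Prod.snd ⁻¹' levelSet C l :=
  convexHull_min (by rintro _ ⟨i, -, rfl⟩; exact levelVec_mem_levelSet hC hl hlpos hF hFpos i)
    ((convex_levelSet C l).linear_preimage (LinearMap.snd ℝ _ _))

theorem mem_upperBounds_varSums_of_levelEnergy_le (hC : IsSetAlg C) (hl : IsFinAdd C l)
    (hlpos : ∀ A ∈ C, 0 ≤ l A) (hl1 : l univ = 1) {y z : ℕ → Set Ω → ℝ}
    (hy : y ∈ levelSet C l) (hz : z ∈ levelSet C l) {k : ℕ} {ε : ℝ} (hε : 0 < ε)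
    (h : levelEnergy C l (y - z) ≤ ε ^ 2 / 8 ^ k) :
    ε ∈ upperBounds (varSums C (fun A => y k A - z k A) univ) := by
  have hterm : (1 / 8 : ℝ) ^ k * sqNorm C l ((y - z) k) ≤ ε ^ 2 / 8 ^ k :=
    ((summable_levelEnergy hC hl hlpos (isDominated_sub_of_mem_levelSet hy hz)).le_tsum k
      fun _ _ => mul_nonneg (by positivity) (sqNorm_nonneg hlpos)).trans h
  rw [one_div_pow, one_div_mul_eq_div, div_le_div_iff_of_pos_right (by positivity)] at hterm
  have hub := sqrt_sqNorm_mem_upperBounds_varSums hC hl hlpos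
    (isDominated_sub_of_mem_levelSet hy hz k)
  rw [hl1, mul_one] at hub
  exact upperBounds_mono_mem (Real.sqrt_le_iff.2 ⟨hε.le, hterm⟩) hub

theorem exists_levelwise_tendsto (hC : IsSetAlg C) (hl : IsFinAdd C l)
    (hlpos : ∀ A ∈ C, 0 ≤ l A) (hl1 : l univ = 1) (hF : ∀ n, IsFinAdd C (F n))
    (hFpos : ∀ n, ∀ A ∈ C, 0 ≤ F n A) :
    ∃ (y : ℕ → (Set Ω → ℝ) × (ℕ → Set Ω → ℝ)) (ν : ℕ → Set Ω → ℝ),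
      (∀ r, ∃ R, y r ∈ convexHull ℝ (levelVec C l F '' Icc r R)) ∧
      (∀ k, ∀ A ∈ C, Tendsto (fun r => (y r).2 k A) atTop (𝓝 (ν k A))) ∧
      ∀ k, ∀ ε > 0, ∃ N, ∀ r ≥ N,
        ε ∈ upperBounds (varSums C (fun A => (y r).2 k A - ν k A) univ) := by
  -- finite windows `Icc r R` keep the supports finite, as the sets `Aₙ` require
  set K : ℕ → Set ((Set Ω → ℝ) × (ℕ → Set Ω → ℝ)) :=
    fun r => ⋃ R, convexHull ℝ (levelVec C l F '' Icc r R)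
  have hKlev : ∀ r, ∀ z ∈ K r, z.2 ∈ levelSet C l := fun r z hz =>
    let ⟨_, hR⟩ := mem_iUnion.1 hz
    convexHull_levelVec_subset hC hl hlpos hF hFpos _ hR
  obtain ⟨y, hyK, hy⟩ := exists_cauchy_of_parallelogram (K := K)
    (Q := fun z => levelEnergy C l z.2)
    (fun r r' h => iUnion_mono fun R => convexHull_mono (image_mono (Icc_subset_Icc_left h)))
    (fun r => Directed.convex_iUnion (Monotone.directed_le fun R R' h =>
      convexHull_mono (image_mono (Icc_subset_Icc_right h))) fun R => convex_convexHull ℝ _)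
    (fun z _ => tsum_nonneg fun k => mul_nonneg (by positivity) (sqNorm_nonneg hlpos))
    (fun z hz w hw => levelEnergy_sub_le hC hl hlpos (hKlev 0 z hz) (hKlev 0 w hw))
    (fun r => ⟨levelVec C l F r, mem_iUnion.2 ⟨r, subset_convexHull ℝ _ ⟨r, ⟨le_rfl, le_rfl⟩, rfl⟩⟩,
      levelEnergy_le hC hl hlpos (levelVec_mem_levelSet hC hl hlpos hF hFpos r)⟩)
  have hcauchy : ∀ k, ∀ ε > 0, ∃ N, ∀ r ≥ N, ∀ r' ≥ N,
      ε ∈ upperBounds (varSums C (fun A => (y r).2 k A - (y r').2 k A) univ) := fun k ε hε =>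
    let ⟨N, hN⟩ := hy (ε ^ 2 / 8 ^ k) (by positivity)
    ⟨N, fun r hr r' hr' => mem_upperBounds_varSums_of_levelEnergy_le hC hl hlpos hl1
      (hKlev r _ (hyK r)) (hKlev r' _ (hyK r')) hε (hN r hr r' hr')⟩
  choose ν hνlim hνvar using fun k => exists_tendsto_of_cauchy_varSums hC (hcauchy k)
  exact ⟨y, ν, fun r => mem_iUnion.1 (hyK r), hνlim, hνvar⟩

end Levels

section LevelSup

variable {C : Set (Set Ω)} {l : Set Ω → ℝ} {ξ : ℕ → Set Ω → ℝ}

def levelSup (ξ : ℕ → Set Ω → ℝ) : Set Ω → ℝ := fun A => ⨆ k, ξ k A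

variable (hC : IsSetAlg C) (hξ : ξ ∈ levelSet C l) {M : ℝ} (hM : ∀ k, ξ k univ ≤ M)
include hC hξ hM

theorem tendsto_levelSup {A : Set Ω} (hA : A ∈ C) :
    Tendsto (fun k => ξ k A) atTop (𝓝 (levelSup ξ A)) :=
  tendsto_atTop_ciSup (monotone_nat_of_le_succ fun k => (hξ k).2.2.2 A hA) ⟨M, by
    rintro _ ⟨k, rfl⟩
    exact ((hξ k).1.mono hC (hξ k).2.1 hA hC.univ_mem (subset_univ A)).trans (hM k)⟩

theorem le_levelSup (k : ℕ) {A : Set Ω} (hA : A ∈ C) : ξ k A ≤ levelSup ξ A :=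
  (monotone_nat_of_le_succ fun k => (hξ k).2.2.2 A hA).ge_of_tendsto
    (tendsto_levelSup hC hξ hM hA) k

theorem isFinAdd_levelSup : IsFinAdd C (levelSup ξ) :=
  IsFinAdd.of_tendsto hC (fun k => (hξ k).1) fun _ hA => tendsto_levelSup hC hξ hM hA

theorem levelSup_nonneg {A : Set Ω} (hA : A ∈ C) : 0 ≤ levelSup ξ A :=
  ((hξ 0).2.1 A hA).trans (le_levelSup hC hξ hM 0 hA)

theorem levelSup_sub_mem_upperBounds (k : ℕ) :
    levelSup ξ univ - ξ k univ ∈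
      upperBounds (varSums C (fun A => levelSup ξ A - ξ k A) univ) :=
  ((isFinAdd_levelSup hC hξ hM).sub (hξ k).1).mem_upperBounds_varSums hC
    fun _ hA => sub_nonneg.2 (le_levelSup hC hξ hM k hA)

theorem absCont_levelSup : AbsCont C (levelSup ξ) l := by
  intro ε hε
  obtain ⟨k, hk⟩ := ((tendsto_levelSup hC hξ hM hC.univ_mem).eventually
    (lt_mem_nhds (sub_lt_self _ (half_pos hε)))).exists
  refine ⟨ε / 2 / 2 ^ k, by positivity, fun A hA hlA => ?_⟩
  rw [(isFinAdd_levelSup hC hξ hM).totalVar_eq hC (fun _ hB => levelSup_nonneg hC hξ hM hB) hA]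
  have hdiff := (le_abs_self _).trans
    (abs_le_of_mem_upperBounds_varSums hC (levelSup_sub_mem_upperBounds hC hξ hM k) hA)
  have hdom : ξ k A < ε / 2 := by
    calc ξ k A ≤ 2 ^ k * l A := (le_abs_self _).trans ((hξ k).2.2.1 A hA)
      _ < 2 ^ k * (ε / 2 / 2 ^ k) := by gcongr
      _ = ε / 2 := by field_simp
  linarith

end LevelSup

theorem restrict_sub_mem_upperBounds_of_subset {C : Set (Set Ω)} {μ V : Set Ω → ℝ}
    (hC : IsSetAlg C) (hμ : IsFinAdd C μ) (hμpos : ∀ A ∈ C, 0 ≤ μ A) {A B : Set Ω}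
    (hA : A ∈ C) (hB : B ∈ C) (hAB : A ⊆ B) {c : ℝ}
    (hc : c ∈ upperBounds (varSums C (fun S => μ (B ∩ S) - V S) univ)) :
    2 * c + V Aᶜ ∈ upperBounds (varSums C (fun S => μ (A ∩ S) - V S) univ) := by
  have hBA := hC.diff_mem hB hA
  have hsplit : ∀ S ∈ C, μ (A ∩ S) - V S = (μ (B ∩ S) - V S) - μ ((B \ A) ∩ S) := by
    intro S hS
    have hBS : B ∩ S = A ∩ S ∪ (B \ A) ∩ S := by
      rw [← Set.union_inter_distrib_right, Set.union_sdiff_cancel hAB]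
    rw [hBS, hμ.2 _ (hC.inter_mem hA hS) _ (hC.inter_mem hBA hS)
      (disjoint_sdiff_right.mono inter_subset_left inter_subset_left)]
    ring
  have hrest := (hμ.restrict hC hBA).mem_upperBounds_varSums hC
    fun S hS => hμpos _ (hC.inter_mem hBA hS)
  have hBAc : μ (B \ A) ≤ c + V Aᶜ := by
    have := (le_abs_self _).trans (abs_le_of_mem_upperBounds_varSums hC hc (hC.compl_mem hA))
    rw [← Set.sdiff_eq] at this
    linarith
  rw [varSums_congr hsplit]
  refine upperBounds_mono_mem ?_ (sub_mem_upperBounds_varSums hc hrest)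
  simp only [Set.inter_univ]
  linarith

section Approximation

variable {C : Set (Set Ω)} {l : Set Ω → ℝ} {F : ℕ → Set Ω → ℝ}
  (hC : IsSetAlg C) (hl : IsFinAdd C l) (hlpos : ∀ A ∈ C, 0 ≤ l A)
  (hF : ∀ n, IsFinAdd C (F n)) (hFpos : ∀ n, ∀ A ∈ C, 0 ≤ F n A)

include hC hl hlpos hFpos in
theorem exists_nearOptimal_sets {M : ℝ} (hM : ∀ n, F n univ ≤ M) :
    ∃ B : ℕ → Set Ω, ∀ i, B i ∈ C ∧
      F i (B i) ≤ dyadicTrunc C l i (F i) univ + 1 / ((i : ℝ) + 1) ∧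
      l (B i)ᶜ ≤ (M + 1) * (1 / 2) ^ i := by
  have hνpos : ∀ i : ℕ, ∀ A ∈ C, 0 ≤ (2 : ℝ) ^ i * l A := fun i A hA =>
    mul_nonneg (by positivity) (hlpos A hA)
  have hex : ∀ i : ℕ, ∃ B ∈ C,
      F i B + 2 ^ i * l Bᶜ < dyadicTrunc C l i (F i) univ + 1 / ((i : ℝ) + 1) := fun i =>
    exists_add_lt_baInf_add (μ := F i) (ν := fun A => 2 ^ i * l A) hC Nat.one_div_pos_of_nat
  choose B hB hlt using hex
  refine ⟨B, fun i => ⟨hB i, ?_, ?_⟩⟩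
  · linarith [hνpos i _ (hC.compl_mem (hB i)), hlt i]
  · have htrunc := (dyadicTrunc_le_self hC hlpos (hFpos i) i hC.univ_mem hl).trans (hM i)
    have hone : 1 / ((i : ℝ) + 1) ≤ 1 := by
      simpa using Nat.one_div_le_one_div (α := ℝ) (Nat.zero_le i)
    rw [one_div_pow, ← div_eq_mul_one_div, le_div_iff₀ (by positivity), mul_comm]
    linarith [hFpos i _ (hB i), hlt i]

include hC hl hlpos in
theorem l_compl_biInter_le {B : ℕ → Set Ω} (hB : ∀ i, B i ∈ C) {K : ℝ}
    (hK : ∀ i, l (B i)ᶜ ≤ K * (1 / 2) ^ i) (r R : ℕ) :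
    l (⋂ i ∈ Finset.Icc r R, B i)ᶜ ≤ 2 * K * (1 / 2) ^ r := by
  have hK0 : 0 ≤ K := by simpa using (hlpos _ (hC.compl_mem (hB 0))).trans (hK 0)
  calc l (⋂ i ∈ Finset.Icc r R, B i)ᶜ = l (⋃ i ∈ Finset.Icc r R, (B i)ᶜ) := by
        rw [Set.compl_iInter₂]
    _ ≤ ∑ i ∈ Finset.Icc r R, l (B i)ᶜ :=
        hl.biUnion_le hC hlpos _ fun i _ => hC.compl_mem (hB i)
    _ ≤ ∑ i ∈ Finset.Icc r R, K * (1 / 2) ^ i := Finset.sum_le_sum fun i _ => hK i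
    _ ≤ K * ((1 / 2) ^ r / (1 - 1 / 2)) := by
        rw [← Finset.mul_sum, ← Finset.Ico_add_one_right_eq_Icc]
        exact mul_le_mul_of_nonneg_left (geom_sum_Ico_le_of_lt_one (by norm_num) (by norm_num)) hK0
    _ = 2 * K * (1 / 2) ^ r := by ring

include hC hlpos hF hFpos in
theorem restrict_sub_mem_upperBounds_of_mem_convexHull {B : ℕ → Set Ω} (hB : ∀ i, B i ∈ C)
    {r R m : ℕ} {c : ℝ} (hc : ∀ i ∈ Icc r R, c ∈ upperBounds
      (varSums C (fun S => F i (B i ∩ S) - dyadicTrunc C l m (F i) S) univ))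
    {z : (Set Ω → ℝ) × (ℕ → Set Ω → ℝ)} (hz : z ∈ convexHull ℝ (levelVec C l F '' Icc r R)) :
    2 * c + 2 ^ m * l (⋂ i ∈ Finset.Icc r R, B i)ᶜ ∈ upperBounds
      (varSums C (fun S => z.1 ((⋂ i ∈ Finset.Icc r R, B i) ∩ S) - z.2 m S) univ) := by
  set A := ⋂ i ∈ Finset.Icc r R, B i
  have hA : A ∈ C := hC.biInter_mem _ fun i _ => hB i
  let Λ : ((Set Ω → ℝ) × (ℕ → Set Ω → ℝ)) →ₗ[ℝ] (Set Ω → ℝ) :=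
    (LinearMap.pi fun S => LinearMap.proj (R := ℝ) (φ := fun _ : Set Ω => ℝ) (A ∩ S)) ∘ₗ
      LinearMap.fst ℝ _ _ - LinearMap.proj (R := ℝ) (φ := fun _ : ℕ => Set Ω → ℝ) m ∘ₗ
        LinearMap.snd ℝ _ _
  refine convexHull_min (t := Λ ⁻¹' {τ | 2 * c + 2 ^ m * l Aᶜ ∈ upperBounds (varSums C τ univ)})
    ?_ ((convex_setOf_mem_upperBounds_varSums C _).linear_preimage Λ) hz
  rintro _ ⟨i, hi, rfl⟩
  show _ ∈ upperBounds (varSums C (fun S => F i (A ∩ S) - dyadicTrunc C l m (F i) S) univ)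
  refine upperBounds_mono_mem ?_ (restrict_sub_mem_upperBounds_of_subset hC (hF i) (hFpos i) hA
    (hB i) (Set.biInter_subset_of_mem (Finset.mem_Icc.2 hi)) (hc i hi))
  exact add_le_add_right (dyadicTrunc_le hC hlpos (hFpos i) m (hC.compl_mem hA) (hF i)) _

include hC hl hlpos hF hFpos in
theorem eventually_mem_upperBounds_restrict_sub {M : ℝ} {B : ℕ → Set Ω}
    (hB : ∀ i, B i ∈ C ∧ F i (B i) ≤ dyadicTrunc C l i (F i) univ + 1 / ((i : ℝ) + 1) ∧
      l (B i)ᶜ ≤ (M + 1) * (1 / 2) ^ i)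
    {L : ℕ → ℝ} {Lsup : ℝ}
    (hL : ∀ k, Tendsto (fun n => dyadicTrunc C l k (F n) univ) atTop (𝓝 (L k)))
    (hdiag : ∀ n, dyadicTrunc C l n (F n) univ ≤ Lsup + 1 / ((n : ℝ) + 1)) (m : ℕ) {ε : ℝ}
    (hε : 0 < ε) : ∀ᶠ i in atTop, Lsup - L m + ε ∈ upperBounds
      (varSums C (fun S => F i (B i ∩ S) - dyadicTrunc C l m (F i) S) univ) := by
  have hlim : Tendsto (fun i : ℕ => Lsup + 2 * (1 / ((i : ℝ) + 1)) -
      dyadicTrunc C l m (F i) univ + 2 * 2 ^ m * (M + 1) * (1 / 2) ^ i) atTop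
      (𝓝 (Lsup - L m)) := by
    simpa using (((tendsto_one_div_add_atTop_nhds_zero_nat.const_mul 2).const_add Lsup).sub
      (hL m)).add ((tendsto_pow_atTop_nhds_zero_of_lt_one (r := (1 / 2 : ℝ)) (by norm_num)
        (by norm_num)).const_mul (2 * 2 ^ m * (M + 1)))
  filter_upwards [hlim.eventually (gt_mem_nhds (lt_add_of_pos_right _ hε))] with i hi
  obtain ⟨hBi, hFB, hlB⟩ := hB i
  refine upperBounds_mono_mem ?_ (restrict_sub_baInf_mem_upperBounds hC (hF i) (hFpos i)
    (hl.const_mul _) (fun A hA => mul_nonneg (by positivity) (hlpos A hA)) hBi)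
  have := mul_le_mul_of_nonneg_left hlB (by positivity : (0 : ℝ) ≤ 2 ^ m)
  have := hdiag i
  unfold dyadicTrunc at *
  linarith

include hC hl hlpos hF hFpos in
theorem exists_convexHull_restrict_approx {M : ℝ} {B : ℕ → Set Ω}
    (hB : ∀ i, B i ∈ C ∧ F i (B i) ≤ dyadicTrunc C l i (F i) univ + 1 / ((i : ℝ) + 1) ∧
      l (B i)ᶜ ≤ (M + 1) * (1 / 2) ^ i)
    {L : ℕ → ℝ} {Lsup : ℝ}
    (hL : ∀ k, Tendsto (fun n => dyadicTrunc C l k (F n) univ) atTop (𝓝 (L k)))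
    (hdiag : ∀ n, dyadicTrunc C l n (F n) univ ≤ Lsup + 1 / ((n : ℝ) + 1))
    (hLsup : Tendsto L atTop (𝓝 Lsup)) {y : ℕ → (Set Ω → ℝ) × (ℕ → Set Ω → ℝ)}
    (hy : ∀ r, ∃ R, y r ∈ convexHull ℝ (levelVec C l F '' Icc r R)) {ν : ℕ → Set Ω → ℝ}
    (hyν : ∀ k, ∀ ε > 0, ∃ N, ∀ r ≥ N,
      ε ∈ upperBounds (varSums C (fun A => (y r).2 k A - ν k A) univ))
    {ξ : Set Ω → ℝ} (hξ : ∀ k, Lsup - L k ∈ upperBounds (varSums C (fun A => ξ A - ν k A) univ))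
    (n : ℕ) : ∃ G A, G ∈ convexHull ℝ (tailSet F n) ∧ A ∈ C ∧ l Aᶜ ≤ 2 * (M + 1) * (1 / 2) ^ n ∧
      7 * (1 / ((n : ℝ) + 1)) ∈ upperBounds (varSums C (fun S => G (A ∩ S) - ξ S) univ) := by
  set ε : ℝ := 1 / ((n : ℝ) + 1)
  have hε : 0 < ε := Nat.one_div_pos_of_nat
  obtain ⟨m, hm⟩ := (hLsup.eventually (lt_mem_nhds (sub_lt_self Lsup hε))).exists
  obtain ⟨N, hN⟩ := hyν m ε hε
  have hpow : Tendsto (fun r : ℕ => 2 ^ m * (2 * (M + 1)) * (1 / 2 : ℝ) ^ r) atTop (𝓝 0) := by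
    simpa only [mul_zero] using (tendsto_pow_atTop_nhds_zero_of_lt_one (r := (1 / 2 : ℝ))
      (by norm_num) (by norm_num)).const_mul (2 ^ m * (2 * (M + 1)))
  obtain ⟨r, ⟨hnr, hNr⟩, hgen, hsmall⟩ := (((eventually_ge_atTop n).and (eventually_ge_atTop N)).and
    ((eventually_forall_ge_atTop.2 (eventually_mem_upperBounds_restrict_sub hC hl hlpos hF hFpos
      hB hL hdiag m hε)).and (hpow.eventually (ge_mem_nhds hε)))).exists
  obtain ⟨R, hR⟩ := hy r
  have hlA := l_compl_biInter_le hC hl hlpos (fun i => (hB i).1) (fun i => (hB i).2.2) r R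
  refine ⟨(y r).1, _, ?_, hC.biInter_mem _ fun i _ => (hB i).1, hlA.trans ?_, ?_⟩
  · refine convexHull_min (t := Prod.fst ⁻¹' convexHull ℝ (tailSet F n)) ?_
      ((convex_convexHull ℝ _).linear_preimage (LinearMap.fst ℝ _ _)) hR
    rintro _ ⟨i, hi, rfl⟩
    exact subset_convexHull ℝ _ ⟨i, hnr.trans hi.1, rfl⟩
  · have : (0 : ℝ) ≤ M + 1 := by
      linarith [hlpos _ (hC.compl_mem (hB 0).1), (hB 0).2.2, pow_zero (1 / 2 : ℝ)]
    exact mul_le_mul_of_nonneg_left (pow_le_pow_of_le_one (by norm_num) (by norm_num) hnr)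
      (by linarith)
  · have h := sub_mem_upperBounds_varSums (add_mem_upperBounds_varSums
      (restrict_sub_mem_upperBounds_of_mem_convexHull hC hlpos hF hFpos (fun i => (hB i).1)
        (fun i hi => hgen i hi.1) hR) (hN r hNr)) (hξ m)
    rw [varSums_congr (ν := fun S => (y r).1 ((⋂ i ∈ Finset.Icc r R, B i) ∩ S) - ξ S)
      fun S _ => by ring] at h
    refine upperBounds_mono_mem ?_ h
    nlinarith [mul_le_mul_of_nonneg_left hlA (by positivity : (0 : ℝ) ≤ 2 ^ m)]

end Approximation

theorem komlos_of_tendsto_dyadicTrunc {C : Set (Set Ω)} (hC : IsSetAlg C) {l : Set Ω → ℝ}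
    (hl : IsFAProb C l) {F : ℕ → Set Ω → ℝ} (hF : ∀ n, IsFinAdd C (F n))
    (hFpos : ∀ n, ∀ A ∈ C, 0 ≤ F n A) {M : ℝ} (hM : ∀ n, F n univ ≤ M) {L : ℕ → ℝ}
    (hL : ∀ k, Tendsto (fun n => dyadicTrunc C l k (F n) univ) atTop (𝓝 (L k)))
    (hdiag : ∀ n, dyadicTrunc C l n (F n) univ ≤ L n + 1 / ((n : ℝ) + 1)) :
    ∃ (ξ : Set Ω → ℝ) (G : ℕ → Set Ω → ℝ) (A : ℕ → Set Ω),
      Memba C ξ ∧ (∀ B ∈ C, 0 ≤ ξ B) ∧ AbsCont C ξ l ∧ (∀ k, L k ≤ tvNorm C ξ) ∧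
      (∀ n, G n ∈ convexHull ℝ (tailSet F n)) ∧ (∀ n, A n ∈ C) ∧
      Tendsto (fun n => tvNorm C (fun B => G n (A n ∩ B) - ξ B)) atTop (𝓝 0) ∧
      Summable (fun n => l (A n)ᶜ) := by
  obtain ⟨⟨hlfa, -⟩, hlpos, hl1⟩ := hl
  obtain ⟨y, ν, hy, hνlim, hyν⟩ := exists_levelwise_tendsto hC hlfa hlpos hl1 hF hFpos
  have hν : ν ∈ levelSet C l := levelSet_of_tendsto hC (fun r =>
    let ⟨_, hR⟩ := hy r
    convexHull_levelVec_subset hC hlfa hlpos hF hFpos _ hR) hνlim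
  have hνL : ∀ k, ν k univ = L k := fun k => by
    let φ : ((Set Ω → ℝ) × (ℕ → Set Ω → ℝ)) →ₗ[ℝ] ℝ :=
      LinearMap.proj univ ∘ₗ LinearMap.proj k ∘ₗ LinearMap.snd ℝ _ _
    exact tendsto_nhds_unique (hνlim k univ hC.univ_mem) (tendsto_of_mem_convexHull φ (hL k) hy)
  have hνM : ∀ k, ν k univ ≤ M := fun k => hνL k ▸ le_of_tendsto' (hL k) fun n =>
    (dyadicTrunc_le_self hC hlpos (hFpos n) k hC.univ_mem hlfa).trans (hM n)
  set ξ := levelSup ν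
  have hLξ : ∀ k, L k ≤ ξ univ := fun k => hνL k ▸ le_levelSup hC hν hνM k hC.univ_mem
  have hξfa := isFinAdd_levelSup hC hν hνM
  have hξpos : ∀ A ∈ C, 0 ≤ ξ A := fun A hA => levelSup_nonneg hC hν hνM hA
  obtain ⟨B, hB⟩ := exists_nearOptimal_sets hC hlfa hlpos hFpos hM
  choose G A hG hA hlA hvar using exists_convexHull_restrict_approx hC hlfa hlpos hF hFpos hB hL
    (fun n => (hdiag n).trans (by linarith [hLξ n]))
    (by simpa only [hνL] using tendsto_levelSup hC hν hνM hC.univ_mem) hy hyν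
    fun k => hνL k ▸ levelSup_sub_mem_upperBounds hC hν hνM k
  refine ⟨ξ, G, A, ⟨hξfa, _, hξfa.mem_upperBounds_varSums hC hξpos⟩, hξpos,
    absCont_levelSup hC hν hνM, fun k => ?_, hG, hA, ?_, ?_⟩
  · rw [tvNorm, hξfa.totalVar_eq hC hξpos hC.univ_mem]
    exact hLξ k
  · refine squeeze_zero (fun n => tvNorm_nonneg _)
      (fun n => tvNorm_le_of_mem_upperBounds hC (hvar n)) ?_
    simpa using (tendsto_one_div_add_atTop_nhds_zero_nat (𝕜 := ℝ)).const_mul 7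
  · exact Summable.of_nonneg_of_le (fun n => hlpos _ (hC.compl_mem (hA n))) hlA
      ((summable_geometric_of_lt_one (by norm_num) (by norm_num)).mul_left _)

theorem exists_subseq_tendsto_levels {a : ℕ → ℕ → ℝ} {M : ℝ} (h0 : ∀ n k, 0 ≤ a n k)
    (hM : ∀ n k, a n k ≤ M) {k₀ : ℕ} {c : ℝ} (hc : c < limsup (fun n => a n k₀) atTop) :
    ∃ φ : ℕ → ℕ, StrictMono φ ∧ ∃ L : ℕ → ℝ,
      (∀ k, Tendsto (fun n => a (φ n) k) atTop (𝓝 (L k))) ∧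
      (∀ n, a (φ n) n ≤ L n + 1 / ((n : ℝ) + 1)) ∧ c ≤ L k₀ := by
  have hcob : IsCoboundedUnder (· ≤ ·) atTop fun n => a n k₀ :=
    (isBoundedUnder_of ⟨0, fun n => h0 n k₀⟩ : IsBoundedUnder (· ≥ ·) atTop _).isCoboundedUnder_le
  obtain ⟨φ₁, hφ₁, hcφ₁⟩ := extraction_of_frequently_atTop (frequently_lt_of_lt_limsup hcob hc)
  have : CompactSpace (Icc (0 : ℝ) M) := isCompact_iff_compactSpace.1 isCompact_Icc
  obtain ⟨L, θ, hθ, hlim⟩ := CompactSpace.tendsto_subseq fun n k =>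
    (⟨a (φ₁ n) k, h0 _ k, hM _ k⟩ : Icc (0 : ℝ) M)
  have hlim' : ∀ k, Tendsto (fun j => a (φ₁ (θ j)) k) atTop (𝓝 (L k : ℝ)) := fun k =>
    (continuous_subtype_val.tendsto _).comp (tendsto_pi_nhds.1 hlim k)
  obtain ⟨ψ, hψ, hdiag⟩ := extraction_forall_of_eventually fun n =>
    (hlim' n).eventually (gt_mem_nhds (lt_add_of_pos_right _ (Nat.one_div_pos_of_nat (n := n))))
  exact ⟨φ₁ ∘ θ ∘ ψ, hφ₁.comp (hθ.comp hψ), fun k => L k,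
    fun k => (hlim' k).comp hψ.tendsto_atTop, fun n => (hdiag n).le,
    ge_of_tendsto ((hlim' k₀).comp hψ.tendsto_atTop) (Eventually.of_forall fun n => (hcφ₁ _).le)⟩

/-- (Komlós theorem for additive set functions.) Given a norm bounded
sequence `(F n)` in `ba(C)₊`, `δ > 0` and a finitely additive probability `l`, there
are `ξ ∈ ba(C)₊` with `ξ ≪ l` and `‖ξ‖ ≥ sup_k limsup_n ‖F n ∧ 2^k l‖ − δ`, a sequence
`(G n)` with `G n ∈ co {F n, F (n+1), ...}` and sets `(A n)` in `C` such that
`‖(G n)_{A n} − ξ‖ → 0` and `Σ_n l((A n)ᶜ) < ∞`. -/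
theorem komlos_ba {Ω : Type} (C : Set (Set Ω)) (hC : IsSetAlg C)
    (F : ℕ → Set Ω → ℝ) (hF : ∀ n, Memba C (F n))
    (hFpos : ∀ n, ∀ A ∈ C, 0 ≤ F n A)
    (hbdd : ∃ M : ℝ, ∀ n, tvNorm C (F n) ≤ M)
    (δ : ℝ) (hδ : 0 < δ) (l : Set Ω → ℝ) (hl : IsFAProb C l) :
    ∃ (ξ : Set Ω → ℝ) (G : ℕ → Set Ω → ℝ) (A : ℕ → Set Ω),
      Memba C ξ ∧ (∀ B ∈ C, 0 ≤ ξ B) ∧ AbsCont C ξ l ∧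
      (⨆ k : ℕ, Filter.limsup
          (fun n => tvNorm C (baInf C (F n) (fun B => (2:ℝ) ^ k * l B))) atTop) - δ
        ≤ tvNorm C ξ ∧
      (∀ n, G n ∈ convexHull ℝ (tailSet F n)) ∧
      (∀ n, A n ∈ C) ∧
      Tendsto (fun n => tvNorm C (fun B => G n (A n ∩ B) - ξ B)) atTop (nhds 0) ∧
      Summable (fun n => l (A n)ᶜ) := by
  obtain ⟨M, hM⟩ := hbdd
  have hlfa := hl.1.1
  have hlpos := hl.2.1
  have hFM : ∀ n, F n univ ≤ M := fun n =>
    (hF n).1.totalVar_eq hC (hFpos n) hC.univ_mem ▸ hM n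
  have hnorm : ∀ n k, tvNorm C (baInf C (F n) fun B => (2 : ℝ) ^ k * l B) =
      dyadicTrunc C l k (F n) univ := fun n k =>
    tvNorm_dyadicTrunc hC hlfa hlpos (hF n).1 (hFpos n) k
  simp only [hnorm]
  obtain ⟨k₀, hk₀⟩ := exists_lt_of_lt_ciSup (sub_lt_self (⨆ k : ℕ, limsup
    (fun n => dyadicTrunc C l k (F n) univ) atTop) hδ)
  obtain ⟨φ, hφ, L, hL, hdiag, hLk₀⟩ := exists_subseq_tendsto_levels
    (fun n k => dyadicTrunc_nonneg hC hlpos (hFpos n) k hC.univ_mem)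
    (fun n k => (dyadicTrunc_le_self hC hlpos (hFpos n) k hC.univ_mem hlfa).trans (hFM n)) hk₀
  obtain ⟨ξ, G, A, hξ, hξpos, hac, hLξ, hG, hA, htend, hsum⟩ := komlos_of_tendsto_dyadicTrunc hC
    hl (fun n => (hF (φ n)).1) (fun n => hFpos (φ n)) (fun n => hFM (φ n)) hL hdiag
  refine ⟨ξ, G, A, hξ, hξpos, hac, hLk₀.trans (hLξ k₀), fun n => convexHull_mono ?_ (hG n), hA,
    htend, hsum⟩
  rintro _ ⟨i, hi, rfl⟩
  exact ⟨φ i, hi.trans (hφ.id_le i), rfl⟩
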